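/- Let q > 0 and let E_1, ..., E_k be linear expressions in a polymatroid h of the form E_ℓ(h) = Σ_j d_{ℓ,j}·(h(X_{ℓ,j} ∪ Y_{ℓ,j}) - h(X_{ℓ,j})) with all d_{ℓ,j} ≥ 0 and |X_{ℓ,j}| ≤ 1 (simple conditional expressions). If the inequality q·h([n]) ≤ max_{ℓ∈[k]} E_ℓ(h) holds for every normal polymatroid h, then it holds for every polymatroid h. -/

import Mathlib

/-- The step function at `W`: `0` on subsets of `W`, `1` otherwise. -/
def stepFn {n : ℕ} (W X : Finset (Fin n)) : ℝ := if X ⊆ W then 0 else 1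

/-- A normal polymatroid: a non-negative linear combination of step functions `h_W`, `W ⊊ [n]`. -/
def IsNormal {n : ℕ} (h : Finset (Fin n) → ℝ) : Prop :=
  ∃ c : Finset (Fin n) → ℝ, (∀ W, 0 ≤ c W) ∧
    ∀ X, h X = ∑ W ∈ Finset.univ.filter (fun W => W ≠ Finset.univ), c W * stepFn W X

/-- A polymatroid on `[n]`: non-negative, zero on `∅`, monotone and submodular. -/
def IsPolymatroid {n : ℕ} (h : Finset (Fin n) → ℝ) : Prop :=
  h ∅ = 0 ∧ (∀ X, 0 ≤ h X) ∧
    (∀ X Y : Finset (Fin n), h X ≤ h (X ∪ Y)) ∧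
    (∀ X Y : Finset (Fin n), h (X ∪ Y) + h (X ∩ Y) ≤ h X + h Y)

/-!
Replacing a polymatroid `h` by a normal `h' ≤ h` that agrees with `h` on `[n]` and on
singletons keeps the left-hand side and can only decrease every simple conditional expression,
since `h'(X ∪ Y) ≤ h(X ∪ Y)` while `h'(X) = h(X)` for `|X| ≤ 1`.

Such an `h'` is built by induction on the ground set `S = insert u T`: take a normal minorant `g`
of the contraction `X ↦ h(X ∪ u) - h(u)` adapted to `T`, and put
`h'(X) = max_{v ∈ X} I(u; v) + g(X \ u)`, with `I(u; v) = h(u) + h(v) - h(uv)`.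
The maximum of non-negative weights is normal by a layer-cake decomposition, and domination
reduces, for a maximising `v ∈ X`, to the submodular inequality `h(X ∪ u) + h(v) ≤ h(X) + h(uv)`.
-/

open Finset NNReal

variable {n : ℕ}

theorem stepFn_univ (X : Finset (Fin n)) : stepFn univ X = 0 :=
  if_pos (subset_univ X)

theorem isNormal_iff {h : Finset (Fin n) → ℝ} :
    IsNormal h ↔ ∃ c : Finset (Fin n) → ℝ, (∀ W, 0 ≤ c W) ∧
      ∀ X, h X = ∑ W, c W * stepFn W X := by
  have hsum : ∀ (c : Finset (Fin n) → ℝ) X,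
      ∑ W ∈ univ.filter (fun W => W ≠ univ), c W * stepFn W X = ∑ W, c W * stepFn W X :=
    fun c X => sum_filter_of_ne fun W _ hW hWu => hW (by rw [hWu, stepFn_univ, mul_zero])
  simp only [IsNormal, hsum]

theorem isNormal_zero : IsNormal (fun _ : Finset (Fin n) => (0 : ℝ)) :=
  isNormal_iff.2 ⟨0, fun _ => le_rfl, fun _ => by simp⟩

theorem isNormal_const_mul_stepFn {a : ℝ} (ha : 0 ≤ a) (W : Finset (Fin n)) :
    IsNormal fun X => a * stepFn W X := by
  refine isNormal_iff.2 ⟨fun V => if V = W then a else 0, fun V => ?_, fun X => ?_⟩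
  · dsimp only
    split_ifs <;> simp [ha]
  · simp

namespace IsNormal

variable {f g : Finset (Fin n) → ℝ}

theorem apply_empty (hf : IsNormal f) : f ∅ = 0 := by
  obtain ⟨c, -, hc⟩ := hf
  simp [hc, stepFn]

theorem add (hf : IsNormal f) (hg : IsNormal g) : IsNormal fun X => f X + g X := by
  obtain ⟨c, hc0, hc⟩ := isNormal_iff.1 hf
  obtain ⟨d, hd0, hd⟩ := isNormal_iff.1 hg
  exact isNormal_iff.2 ⟨c + d, fun W => add_nonneg (hc0 W) (hd0 W),
    fun X => by simp [hc, hd, add_mul, sum_add_distrib]⟩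

theorem sum {ι : Type*} (s : Finset ι) {F : ι → Finset (Fin n) → ℝ}
    (hF : ∀ i ∈ s, IsNormal (F i)) : IsNormal fun X => ∑ i ∈ s, F i X := by
  classical
  induction s using Finset.induction_on with
  | empty => simpa using isNormal_zero
  | insert i s hi ih =>
    simp only [sum_insert hi]
    exact (hF i (mem_insert_self i s)).add (ih fun j hj => hF j (mem_insert_of_mem hj))

theorem comp_erase (hf : IsNormal f) (u : Fin n) : IsNormal fun X => f (X.erase u) := by
  obtain ⟨c, hc0, hc⟩ := isNormal_iff.1 hf
  have hstep : ∀ W X : Finset (Fin n), stepFn W (X.erase u) = stepFn (insert u W) X := by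
    intro W X
    simp only [stepFn, ← subset_insert_iff]
  simp only [hc, hstep]
  exact sum univ fun W _ => isNormal_const_mul_stepFn (hc0 W) _

end IsNormal

/-- Layer cake, peeled off one level at a time: if `ψ` vanishes off `A` and `a = min_A ψ`, then
`max_X ψ = a · [X ⊄ Aᶜ] + max_X (ψ - a)`, and `ψ - a` vanishes off a smaller set. -/
theorem isNormal_sup (ψ : Fin n → ℝ≥0) : IsNormal fun X => ((X.sup ψ : ℝ≥0) : ℝ) := by
  suffices ∀ A : Finset (Fin n), ∀ ψ : Fin n → ℝ≥0, (∀ v ∉ A, ψ v = 0) →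
      IsNormal fun X => ((X.sup ψ : ℝ≥0) : ℝ) from this univ ψ (by simp)
  intro A
  induction A using Finset.strongInduction with
  | H A ih =>
  intro ψ hψ
  rcases A.eq_empty_or_nonempty with rfl | hA
  · have hψ0 : ∀ X : Finset (Fin n), X.sup ψ = 0 :=
      fun X => (Finset.sup_eq_bot_iff ψ X).2 fun v _ => hψ v (notMem_empty v)
    simpa [hψ0] using isNormal_zero
  obtain ⟨v, hvA, hv_min⟩ := A.exists_min_image ψ hA
  have hsup_sub : ∀ X : Finset (Fin n), X.sup (fun w => ψ w - ψ v) = X.sup ψ - ψ v :=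
    fun X => (apply_sup_eq_sup_comp_of_linearOrder (· - ψ v)
      (fun _ _ h => tsub_le_tsub_right h _) (zero_tsub _)).symm
  have hsplit : ∀ X : Finset (Fin n),
      ((X.sup ψ : ℝ≥0) : ℝ) = ψ v * stepFn Aᶜ X + ((X.sup fun w => ψ w - ψ v : ℝ≥0) : ℝ) := by
    intro X
    rw [hsup_sub, stepFn]
    by_cases hX : X ⊆ Aᶜ
    · have : X.sup ψ = 0 := (Finset.sup_eq_bot_iff ψ X).2 fun w hw => hψ w (mem_compl.1 (hX hw))
      simp [hX, this]
    · obtain ⟨w, hwX, hwA⟩ := not_subset.1 hX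
      have : ψ v ≤ X.sup ψ := (hv_min w (by simpa using hwA)).trans (le_sup hwX)
      rw [if_neg hX, NNReal.coe_sub this]
      ring
  simp only [hsplit]
  refine (isNormal_const_mul_stepFn (ψ v).2 _).add (ih _ (erase_ssubset hvA) _ fun w hw => ?_)
  rcases eq_or_ne w v with rfl | hwv
  · exact tsub_self _
  · simp [hψ w (fun hwA => hw (mem_erase.2 ⟨hwv, hwA⟩))]

theorem Finset.insert_erase_eq_insert {α : Type*} [DecidableEq α] (s : Finset α) (a : α) :
    insert a (s.erase a) = insert a s := by
  ext; simp only [mem_insert, mem_erase]; tauto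

namespace IsPolymatroid

variable {h : Finset (Fin n) → ℝ}

theorem mono (hp : IsPolymatroid h) {A B : Finset (Fin n)} (hAB : A ⊆ B) : h A ≤ h B := by
  simpa [union_eq_right.2 hAB] using hp.2.2.1 A B

theorem contract (hp : IsPolymatroid h) (u : Fin n) :
    IsPolymatroid fun X => h (insert u X) - h {u} := by
  refine ⟨by simp, fun X => sub_nonneg.2 (hp.mono (by simp)), fun X Y => ?_, fun X Y => ?_⟩
  · simpa [insert_union] using hp.2.2.1 (insert u X) Y
  · have := hp.2.2.2 (insert u X) (insert u Y)
    rw [← insert_union_distrib, ← insert_inter_distrib] at this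
    linarith

theorem pair_le (hp : IsPolymatroid h) (u v : Fin n) : h {u, v} ≤ h {u} + h {v} := by
  obtain ⟨-, hnonneg, -, hsub⟩ := hp
  have := hsub {u} {v}
  have := hnonneg ({u} ∩ {v})
  rw [← insert_eq] at *
  linarith

theorem insert_add_singleton_le (hp : IsPolymatroid h) (u : Fin n) {v : Fin n}
    {X : Finset (Fin n)} (hv : v ∈ X) : h (insert u X) + h {v} ≤ h X + h {u, v} := by
  have hsub := hp.2.2.2 X {u, v}
  have hunion : X ∪ {u, v} = insert u X := by
    ext w; simp only [mem_union, mem_insert, mem_singleton]; grind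
  have hinter : h {v} ≤ h (X ∩ {u, v}) := hp.mono (by simp [hv])
  rw [hunion] at hsub
  linarith

theorem exists_isNormal_le (hp : IsPolymatroid h) (S : Finset (Fin n)) :
    ∃ g, IsNormal g ∧ (∀ X, g X ≤ h X) ∧ g S = h S ∧ ∀ v ∈ S, g {v} = h {v} := by
  classical
  induction S using Finset.induction_on generalizing h with
  | empty => exact ⟨fun _ => 0, isNormal_zero, hp.2.1, hp.1.symm, by simp⟩
  | insert u T hu ih =>
  obtain ⟨g, hg, hgh, hgT, hg_single⟩ := ih (hp.contract u)
  set ψ : Fin n → ℝ≥0 := fun v => (h {u} + h {v} - h {u, v}).toNNReal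
  have hψ : ∀ v, (ψ v : ℝ) = h {u} + h {v} - h {u, v} :=
    fun v => Real.coe_toNNReal _ (by linarith [hp.pair_le u v])
  have hψ_le : ∀ v, (ψ v : ℝ) ≤ h {u} :=
    fun v => by linarith [hψ v, hp.mono (show {v} ⊆ ({u, v} : Finset (Fin n)) by simp)]
  have hψu : (ψ u : ℝ) = h {u} := by simp [hψ]
  refine ⟨fun X => ((X.sup ψ : ℝ≥0) : ℝ) + g (X.erase u), (isNormal_sup ψ).add (hg.comp_erase u),
    fun X => ?_, ?_, fun v hv => ?_⟩
  · rcases X.eq_empty_or_nonempty with rfl | hX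
    · simpa [hg.apply_empty] using hp.2.1 ∅
    obtain ⟨v, hvX, hv⟩ := exists_mem_eq_sup X hX ψ
    have := hgh (X.erase u)
    rw [insert_erase_eq_insert] at this
    show ((X.sup ψ : ℝ≥0) : ℝ) + g (X.erase u) ≤ h X
    rw [hv, hψ]
    linarith [hp.insert_add_singleton_le u hvX]
  · obtain ⟨v, -, hv⟩ := exists_mem_eq_sup _ (insert_nonempty u T) ψ
    have hsup : (((insert u T).sup ψ : ℝ≥0) : ℝ) = h {u} :=
      le_antisymm (hv ▸ hψ_le v) (hψu ▸ NNReal.coe_le_coe.2 (le_sup (mem_insert_self u T)))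
    simp only [hsup, erase_insert hu, hgT]
    ring
  · rcases mem_insert.1 hv with rfl | hvT
    · simp [hψu, hg.apply_empty]
    · have hvu : v ≠ u := ne_of_mem_of_not_mem hvT hu
      simp only [sup_singleton, erase_eq_of_notMem (notMem_singleton.2 hvu.symm),
        hg_single v hvT, hψ]
      ring

end IsPolymatroid

theorem simple_max_inequality_essentially_shannon_general {n k m : ℕ} (q : ℝ)
    (d : Fin k → Fin m → ℝ) (hd : ∀ ℓ j, 0 ≤ d ℓ j)
    (Xs Ys : Fin k → Fin m → Finset (Fin n))
    (hX : ∀ ℓ j, (Xs ℓ j).card ≤ 1)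
    (hnormal : ∀ h : Finset (Fin n) → ℝ, IsNormal h →
      ∃ ℓ : Fin k, q * h Finset.univ ≤
        ∑ j, d ℓ j * (h (Xs ℓ j ∪ Ys ℓ j) - h (Xs ℓ j)))
    (h : Finset (Fin n) → ℝ) (hp : IsPolymatroid h) :
    ∃ ℓ : Fin k, q * h Finset.univ ≤
      ∑ j, d ℓ j * (h (Xs ℓ j ∪ Ys ℓ j) - h (Xs ℓ j)) := by
  obtain ⟨g, hg, hgh, hg_univ, hg_single⟩ := hp.exists_isNormal_le univ
  have hg_small : ∀ X : Finset (Fin n), X.card ≤ 1 → g X = h X := by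
    intro X hX
    rcases Nat.le_one_iff_eq_zero_or_eq_one.1 hX with hX0 | hX1
    · rw [card_eq_zero.1 hX0, hg.apply_empty, hp.1]
    · obtain ⟨v, rfl⟩ := card_eq_one.1 hX1
      exact hg_single v (mem_univ v)
  obtain ⟨ℓ, hℓ⟩ := hnormal g hg
  refine ⟨ℓ, hg_univ ▸ hℓ.trans (sum_le_sum fun j _ => ?_)⟩
  rw [hg_small _ (hX ℓ j)]
  exact mul_le_mul_of_nonneg_left (sub_le_sub_right (hgh _) _) (hd ℓ j)

/-- Simple max-inequalities are essentially-Shannon: if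
`q·h([n]) ≤ max_ℓ Σ_j d_{ℓ,j}·h(Y_{ℓ,j}|X_{ℓ,j})` (with all `|X_{ℓ,j}| ≤ 1`) holds for all
normal polymatroids, then it holds for all polymatroids. -/
theorem simple_max_inequality_essentially_shannon {n k m : ℕ} (q : ℝ) (hq : 0 < q)
    (d : Fin k → Fin m → ℝ) (hd : ∀ ℓ j, 0 ≤ d ℓ j)
    (Xs Ys : Fin k → Fin m → Finset (Fin n))
    (hX : ∀ ℓ j, (Xs ℓ j).card ≤ 1)
    (hnormal : ∀ h : Finset (Fin n) → ℝ, IsNormal h →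
      ∃ ℓ : Fin k, q * h Finset.univ ≤
        ∑ j, d ℓ j * (h (Xs ℓ j ∪ Ys ℓ j) - h (Xs ℓ j)))
    (h : Finset (Fin n) → ℝ) (hp : IsPolymatroid h) :
    ∃ ℓ : Fin k, q * h Finset.univ ≤
      ∑ j, d ℓ j * (h (Xs ℓ j ∪ Ys ℓ j) - h (Xs ℓ j)) :=
  simple_max_inequality_essentially_shannon_general q d hd Xs Ys hX hnormal h hp
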